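/- arXiv:2401.13356 — 2 statements merged into one kernel-verified Lean document; each statement's English description precedes it below -/
import Mathlib

section
/- The orbits of the blocks {0,1,5}, {0,2,10}, {0,3,9}, {0,7,14} under the map i ↦ i+1 on ℤ₂₁ form a Steiner triple system of order 21. -/
/-!
Both the block family and the Steiner property are invariant under translation, and ℤ₂₁ acts
transitively on itself, so it suffices to show that every pair `{0, d}` lies in exactly one block.
A translate `t +ᵥ B` of a base block contains `0` iff `t = -x` for some `x ∈ B`, and then it
contains `d` iff `x + d ∈ B`; this leaves a finite check on the four base blocks.
-/

def cyclicBlockC3 (b : Finset (ZMod 21)) : Prop :=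
  ∃ t : ZMod 21,
    b = {t, t + 1, t + 5} ∨ b = {t, t + 2, t + 10} ∨
    b = {t, t + 3, t + 9} ∨ b = {t, t + 7, t + 14}

open Pointwise

theorem existsUnique_of_existsUnique_basepoint {G β : Type*} [AddGroup G] [AddAction G β]
    [AddAction.IsPretransitive G β] [DecidableEq β] {P : Finset β → Prop}
    (hP : ∀ (g : G) (b : Finset β), P b → P (g +ᵥ b)) (x₀ : β)
    (h₀ : ∀ y, y ≠ x₀ → ∃! b, P b ∧ x₀ ∈ b ∧ y ∈ b) {p q : β} (hpq : p ≠ q) :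
    ∃! b, P b ∧ p ∈ b ∧ q ∈ b := by
  obtain ⟨g, rfl⟩ := AddAction.exists_vadd_eq G x₀ p
  have hq : -g +ᵥ q ≠ x₀ := fun h => hpq (by rw [← h, vadd_neg_vadd])
  obtain ⟨b₀, ⟨hb₀, hx₀, hqb₀⟩, huniq⟩ := h₀ _ hq
  refine ⟨g +ᵥ b₀, ⟨hP g b₀ hb₀, Finset.vadd_mem_vadd_finset hx₀, ?_⟩, ?_⟩
  · rw [← vadd_neg_vadd g q]
    exact Finset.vadd_mem_vadd_finset hqb₀
  · rintro b ⟨hb, hpb, hqb⟩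
    have := huniq (-g +ᵥ b)
      ⟨hP _ b hb, Finset.mem_neg_vadd_finset_iff.2 hpb, Finset.vadd_mem_vadd_finset hqb⟩
    rw [← this, vadd_neg_vadd]

def baseBlock : Fin 4 → Finset (ZMod 21)
  | 0 => {0, 1, 5}
  | 1 => {0, 2, 10}
  | 2 => {0, 3, 9}
  | 3 => {0, 7, 14}

theorem cyclicBlockC3_iff {b : Finset (ZMod 21)} :
    cyclicBlockC3 b ↔ ∃ (t : ZMod 21) (k : Fin 4), b = t +ᵥ baseBlock k := by
  simp [cyclicBlockC3, Fin.exists_fin_succ, baseBlock, Finset.vadd_finset_insert]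

theorem cyclicBlockC3_vadd (t : ZMod 21) {b : Finset (ZMod 21)} (hb : cyclicBlockC3 b) :
    cyclicBlockC3 (t +ᵥ b) := by
  obtain ⟨s, k, rfl⟩ := cyclicBlockC3_iff.1 hb
  exact cyclicBlockC3_iff.2 ⟨t + s, k, vadd_vadd t s _⟩

theorem card_baseBlock (k : Fin 4) : (baseBlock k).card = 3 := by
  fin_cases k <;> rfl

theorem baseBlock_differences_exist :
    ∀ d : ZMod 21, d ≠ 0 → ∃ k, ∃ x ∈ baseBlock k, x + d ∈ baseBlock k := by
  decide

-- The conclusion is an equality of blocks rather than of `(k, x)`: within the short orbit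
-- `{0, 7, 14}` the difference `7` arises from three pairs, all giving the same block.
theorem baseBlock_differences_unique :
    ∀ d : ZMod 21, d ≠ 0 → ∀ k k', ∀ x ∈ baseBlock k, x + d ∈ baseBlock k →
      ∀ x' ∈ baseBlock k', x' + d ∈ baseBlock k' → -x +ᵥ baseBlock k = -x' +ᵥ baseBlock k' := by
  decide

theorem existsUnique_cyclicBlockC3_zero_mem {d : ZMod 21} (hd : d ≠ 0) :
    ∃! b, cyclicBlockC3 b ∧ 0 ∈ b ∧ d ∈ b := by
  have mem_iff {x y : ZMod 21} {k : Fin 4} : y ∈ -x +ᵥ baseBlock k ↔ x + y ∈ baseBlock k :=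
    Finset.mem_neg_vadd_finset_iff
  obtain ⟨k, x, hx, hxd⟩ := baseBlock_differences_exist d hd
  refine ⟨-x +ᵥ baseBlock k, ⟨cyclicBlockC3_iff.2 ⟨-x, k, rfl⟩, ?_, mem_iff.2 hxd⟩, ?_⟩
  · rwa [mem_iff, add_zero]
  · rintro b ⟨hb, h0, hdb⟩
    obtain ⟨t, k', rfl⟩ := cyclicBlockC3_iff.1 hb
    rw [← neg_neg t, mem_iff, add_zero] at h0
    rw [← neg_neg t, mem_iff] at hdb
    rw [← neg_neg t]
    exact baseBlock_differences_unique d hd k' k (-t) h0 hdb x hx hxd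

/-- The orbits of {0,1,5}, {0,2,10}, {0,3,9}, {0,7,14} under `i ↦ i+1` on ℤ₂₁
form a Steiner triple system of order 21. -/
theorem stmt_3 :
    (Finset.univ : Finset (ZMod 21)).card = 21 ∧
    (∀ b : Finset (ZMod 21), cyclicBlockC3 b → b.card = 3) ∧
    (∀ p q : ZMod 21, p ≠ q →
      ∃! b : Finset (ZMod 21), cyclicBlockC3 b ∧ p ∈ b ∧ q ∈ b) := by
  refine ⟨Finset.card_univ.trans (ZMod.card 21), ?_, ?_⟩
  · intro b hb
    obtain ⟨t, k, rfl⟩ := cyclicBlockC3_iff.1 hb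
    rw [Finset.card_vadd_finset, card_baseBlock]
  · intro p q hpq
    exact existsUnique_of_existsUnique_basepoint (fun t _ => cyclicBlockC3_vadd t) 0
      (fun _ hd => existsUnique_cyclicBlockC3_zero_mem hd) hpq
end

section
/- The unique STS(9), namely the affine plane AG(2,3) viewed as a triple system on ℤ₃ × ℤ₃ whose blocks are the 12 lines, contains no prism configuration. -/
/-!
A line `{p, p + d, p + 2d}` of AG(2,3) consists of three distinct points summing to
`3p + 3d = 0`. In the signed sum of the six prism lines
`(l+y+z) - (b+c+l) + (m+x+z) - (a+c+m) - (n+x+y) + (a+b+n) = 2(z - c)`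
every other point cancels, so `2(z - c) = 0`, i.e. `z = c` in characteristic 3, contradicting
that the nine points are distinct.
-/

/-- A line of the affine plane AG(2,3) over ℤ₃. -/
def agLine (b : Finset (ZMod 3 × ZMod 3)) : Prop :=
  ∃ p d : ZMod 3 × ZMod 3, d ≠ 0 ∧ b = {p, p + d, p + d + d}

section

variable {G : Type*} [AddCommGroup G] [Module (ZMod 3) G]

theorem three_nsmul_eq_zero_of_zmod3 (g : G) : 3 • g = 0 := by
  rw [← Nat.cast_smul_eq_nsmul (ZMod 3), ZMod.natCast_self, zero_smul]

theorem add_self_ne_zero_of_zmod3 {d : G} (hd : d ≠ 0) : d + d ≠ 0 := fun h =>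
  hd (by linear_combination (norm := module) three_nsmul_eq_zero_of_zmod3 d - h)

theorem card_progression_eq_three [DecidableEq G] (p : G) {d : G} (hd : d ≠ 0) :
    ({p, p + d, p + d + d} : Finset G).card = 3 := by
  rw [Finset.card_insert_of_notMem, Finset.card_pair]
  · simpa [add_assoc] using hd
  · simp [add_assoc, hd, add_self_ne_zero_of_zmod3 hd]

theorem sum_progression_eq_zero (p d : G) : p + (p + d) + (p + d + d) = 0 := by
  linear_combination (norm := module)
    three_nsmul_eq_zero_of_zmod3 p + three_nsmul_eq_zero_of_zmod3 d

theorem prism_eq {a b c l m n x y z : G} (habn : a + b + n = 0) (hacm : a + c + m = 0)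
    (hbcl : b + c + l = 0) (hlyz : l + y + z = 0) (hmxz : m + x + z = 0)
    (hnxy : n + x + y = 0) : c = z := by
  linear_combination (norm := module)
    hlyz - hbcl + hmxz - hacm - hnxy + habn - three_nsmul_eq_zero_of_zmod3 (z - c)

end

theorem Finset.sum_triple_of_card_eq_three {M : Type*} [AddCommMonoid M] [DecidableEq M]
    {u v w : M} (h : ({u, v, w} : Finset M).card = 3) : ∑ t ∈ {u, v, w}, t = u + v + w := by
  have hvw : v ≠ w := by
    rintro rfl
    have := Finset.card_insert_le u ({v, v} : Finset M)
    simp_all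
  have hu : u ∉ ({v, w} : Finset M) := by
    intro hu
    rw [Finset.insert_eq_of_mem hu, Finset.card_pair hvw] at h
    omega
  rw [Finset.sum_insert hu, Finset.sum_pair hvw, add_assoc]

theorem agLine.add_add_eq_zero {u v w : ZMod 3 × ZMod 3} (h : agLine {u, v, w}) :
    u + v + w = 0 := by
  obtain ⟨p, d, hd, hb⟩ := h
  have hcard : ({u, v, w} : Finset _).card = 3 := hb ▸ card_progression_eq_three p hd
  rw [← Finset.sum_triple_of_card_eq_three hcard, hb,
    Finset.sum_triple_of_card_eq_three (card_progression_eq_three p hd)]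
  exact sum_progression_eq_zero p d

/-- The unique STS(9), the affine plane AG(2,3), contains no prism configuration. -/
theorem stmt_17 :
    ¬ ∃ a b c l m n x y z : ZMod 3 × ZMod 3,
      ({a, b, c, l, m, n, x, y, z} : Finset (ZMod 3 × ZMod 3)).card = 9 ∧
      agLine {a, b, n} ∧ agLine {a, c, m} ∧ agLine {b, c, l} ∧
      agLine {l, y, z} ∧ agLine {m, x, z} ∧ agLine {n, x, y} := by
  rintro ⟨a, b, c, l, m, n, x, y, z, hcard, habn, hacm, hbcl, hlyz, hmxz, hnxy⟩
  obtain rfl : c = z := prism_eq habn.add_add_eq_zero hacm.add_add_eq_zero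
    hbcl.add_add_eq_zero hlyz.add_add_eq_zero hmxz.add_add_eq_zero hnxy.add_add_eq_zero
  have hdup : ({a, b, c, l, m, n, x, y, c} : Finset _) = [a, b, c, l, m, n, x, y].toFinset := by
    ext t
    simp only [Finset.mem_insert, Finset.mem_singleton, List.mem_toFinset, List.mem_cons,
      List.not_mem_nil, or_false]
    grind
  have hle := List.toFinset_card_le [a, b, c, l, m, n, x, y]
  rw [← hdup, hcard] at hle
  simp at hle
end
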